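/- arXiv:2504.17302 — 5 statements merged into one kernel-verified Lean document; each statement's English description precedes it below -/
import Mathlib

section
/- If λ is an integer and both λ and -2λ belong to the set M = {(2 + p - p²)/2 : p ∈ ℤ}, then λ = 0 or λ = 1. -/
/-! Completing the square, `x = (2 + p - p²)/2` reads `8x = 9 - (2p - 1)²`. Applied to `λ` and `-2λ`
this gives `2(2p - 1)² + (2q - 1)² = 27`, so the odd square `(2p - 1)²` is `1` or `9`, i.e. `λ = 1`
or `λ = 0`. -/

lemma eight_mul_eq_nine_sub_sq {l p : ℤ} (h : (l : ℚ) = (2 + p - p ^ 2) / 2) :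
    8 * l = 9 - (2 * p - 1) ^ 2 := by
  rw [eq_div_iff two_ne_zero] at h
  have h' : l * 2 = 2 + p - p ^ 2 := by exact_mod_cast h
  linear_combination 4 * h'

lemma Int.sq_eq_one_or_nine_of_odd {a : ℤ} (ha : Odd a) (h : a ^ 2 < 25) :
    a ^ 2 = 1 ∨ a ^ 2 = 9 := by
  obtain ⟨k, rfl⟩ := ha
  have hk : -2 ≤ k ∧ k ≤ 1 := by constructor <;> nlinarith
  obtain ⟨hk₁, hk₂⟩ := hk
  interval_cases k <;> norm_num

theorem eigenvalue_zero_or_one (l : ℤ)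
    (h1 : (l : ℚ) ∈ {x : ℚ | ∃ p : ℤ, x = (2 + p - p ^ 2) / 2})
    (h2 : ((-2 * l : ℤ) : ℚ) ∈ {x : ℚ | ∃ p : ℤ, x = (2 + p - p ^ 2) / 2}) :
    l = 0 ∨ l = 1 := by
  obtain ⟨p, hp⟩ := h1
  obtain ⟨q, hq⟩ := h2
  have hl := eight_mul_eq_nine_sub_sq hp
  have hl' := eight_mul_eq_nine_sub_sq hq
  have hodd : Odd (2 * p - 1) := ⟨p - 1, by ring⟩
  have hsq : (2 * p - 1) ^ 2 < 25 := by nlinarith [sq_nonneg (2 * q - 1)]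
  rcases Int.sq_eq_one_or_nine_of_odd hodd hsq with h | h
  · right; linarith
  · left; linarith
end

section
/- Let V : (ℝ²)ⁿ → ℝ be invariant under simultaneous rotation of all n planar position vectors, smooth near a point d = (d₁,...,dₙ) satisfying ∇V(d) = μ M d with μ ≠ 0 and M = diag(m₁I₂,...,mₙI₂) invertible. Then the vector Ĵd = (J d₁, ..., J dₙ), where J = [[0,-1],[1,0]], is an eigenvector of H(d) = μ⁻¹ M⁻¹ ∇²V(d) with eigenvalue 1 (provided Ĵd ≠ 0). -/
/-!
Rotating the configuration `d` by the angle `t` leaves `V` invariant, so the gradient is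
rotation equivariant: `∇V(R_t d) = R_t ∇V(d)`. Differentiating this identity at `t = 0`, where
`d/dt R_t d = Ĵd`, gives `∇²V(d) (Ĵd) = Ĵ ∇V(d)`; at a Darboux point `∇V(d) = μ M d`, and `Ĵ`
commutes with the block-scalar matrix `M`.
-/

open Matrix

/-- The continuous linear functional `v ↦ ∑ i, ⟪g i, v i⟫` on `n` copies of the
Euclidean plane, representing the gradient `g` of a scalar function. -/
noncomputable def gradCLM {n : ℕ} (g : Fin n → EuclideanSpace ℝ (Fin 2)) :
    (Fin n → EuclideanSpace ℝ (Fin 2)) →L[ℝ] ℝ :=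
  ∑ i, (innerSL ℝ (g i)).comp (ContinuousLinearMap.proj i)

section

variable {n : ℕ}

lemma gradCLM_apply (g v : Fin n → EuclideanSpace ℝ (Fin 2)) :
    gradCLM g v = ∑ i, inner ℝ (g i) (v i) := by
  simp [gradCLM]

lemma gradCLM_single (g : Fin n → EuclideanSpace ℝ (Fin 2)) (j : Fin n)
    (w : EuclideanSpace ℝ (Fin 2)) :
    gradCLM g (Pi.single j w) = inner ℝ (g j) w := by
  rw [gradCLM_apply, Fintype.sum_eq_single j fun i hi => by simp [Pi.single_eq_of_ne hi]]
  simp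

lemma gradCLM_injective : Function.Injective (gradCLM (n := n)) := by
  intro g g' h
  funext j
  refine ext_inner_right ℝ fun w => ?_
  rw [← gradCLM_single, ← gradCLM_single, h]

/-- The paper's `Â = diag(A, …, A)`. -/
noncomputable def blockDiagCLM (A : Matrix (Fin 2) (Fin 2) ℝ) :
    (Fin n → EuclideanSpace ℝ (Fin 2)) →L[ℝ] (Fin n → EuclideanSpace ℝ (Fin 2)) :=
  ContinuousLinearMap.piMap fun _ => toEuclideanCLM (𝕜 := ℝ) A

lemma blockDiagCLM_apply (A : Matrix (Fin 2) (Fin 2) ℝ) (q : Fin n → EuclideanSpace ℝ (Fin 2)) :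
    blockDiagCLM A q = fun i => toEuclideanLin A (q i) :=
  rfl

lemma blockDiagCLM_mul_apply (A B : Matrix (Fin 2) (Fin 2) ℝ)
    (q : Fin n → EuclideanSpace ℝ (Fin 2)) :
    blockDiagCLM (A * B) q = blockDiagCLM A (blockDiagCLM B q) := by
  ext i : 1
  simp [blockDiagCLM]

lemma blockDiagCLM_one_apply (q : Fin n → EuclideanSpace ℝ (Fin 2)) :
    blockDiagCLM 1 q = q := by
  ext i : 1
  simp [blockDiagCLM]

lemma blockDiagCLM_add_apply (A B : Matrix (Fin 2) (Fin 2) ℝ)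
    (q : Fin n → EuclideanSpace ℝ (Fin 2)) :
    blockDiagCLM (A + B) q = blockDiagCLM A q + blockDiagCLM B q := by
  ext i : 1
  simp [blockDiagCLM]

lemma blockDiagCLM_smul_apply (c : ℝ) (A : Matrix (Fin 2) (Fin 2) ℝ)
    (q : Fin n → EuclideanSpace ℝ (Fin 2)) :
    blockDiagCLM (c • A) q = c • blockDiagCLM A q := by
  ext i : 1
  simp [blockDiagCLM]

lemma gradCLM_comp_blockDiagCLM (g : Fin n → EuclideanSpace ℝ (Fin 2))
    (A : Matrix (Fin 2) (Fin 2) ℝ) :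
    (gradCLM g).comp (blockDiagCLM A) = gradCLM (blockDiagCLM Aᵀ g) := by
  ext v
  simp only [ContinuousLinearMap.comp_apply, gradCLM_apply, blockDiagCLM_apply]
  refine Finset.sum_congr rfl fun i _ => ?_
  rw [← conjTranspose_eq_transpose_of_trivial, toEuclideanLin_conjTranspose_eq_adjoint,
    LinearMap.adjoint_inner_left]

theorem eq_blockDiagCLM_of_hasFDerivAt_gradCLM {V : (Fin n → EuclideanSpace ℝ (Fin 2)) → ℝ}
    {R : Matrix (Fin 2) (Fin 2) ℝ} (hR : Rᵀ * R = 1) (hV : ∀ q, V (blockDiagCLM R q) = V q)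
    {q g g' : Fin n → EuclideanSpace ℝ (Fin 2)} (hq : HasFDerivAt V (gradCLM g) q)
    (hRq : HasFDerivAt V (gradCLM g') (blockDiagCLM R q)) :
    g' = blockDiagCLM R g := by
  have hcomp : HasFDerivAt V ((gradCLM g').comp (blockDiagCLM R)) q := by
    simpa only [Function.comp_def, hV] using hRq.comp q (blockDiagCLM R).hasFDerivAt
  have hpullback : blockDiagCLM Rᵀ g' = g :=
    gradCLM_injective (by rw [← gradCLM_comp_blockDiagCLM]; exact hcomp.unique hq)
  rw [← hpullback, ← blockDiagCLM_mul_apply, mul_eq_one_comm.mp hR, blockDiagCLM_one_apply]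

noncomputable def rotMatrix (t : ℝ) : Matrix (Fin 2) (Fin 2) ℝ :=
  Real.cos t • 1 + Real.sin t • !![0, -1; 1, 0]

lemma rotMatrix_eq (t : ℝ) :
    rotMatrix t = !![Real.cos t, -Real.sin t; Real.sin t, Real.cos t] := by
  ext i j
  fin_cases i <;> fin_cases j <;> simp [rotMatrix]

lemma rotMatrix_zero : rotMatrix 0 = 1 := by
  simp [rotMatrix]

lemma transpose_rotMatrix_mul_self (t : ℝ) : (rotMatrix t)ᵀ * rotMatrix t = 1 := by
  rw [rotMatrix_eq]
  ext i j
  fin_cases i <;> fin_cases j <;> simp [mul_apply, Fin.sum_univ_two, ← sq, mul_comm]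

lemma det_rotMatrix (t : ℝ) : (rotMatrix t).det = 1 := by
  rw [rotMatrix_eq, det_fin_two_of]
  linear_combination Real.cos_sq_add_sin_sq t

lemma hasDerivAt_blockDiagCLM_rotMatrix (q : Fin n → EuclideanSpace ℝ (Fin 2)) :
    HasDerivAt (fun t => blockDiagCLM (rotMatrix t) q) (blockDiagCLM !![0, -1; 1, 0] q) 0 := by
  simp only [rotMatrix, blockDiagCLM_add_apply, blockDiagCLM_smul_apply, blockDiagCLM_one_apply]
  simpa only [Real.sin_zero, Real.cos_zero, neg_zero, zero_smul, one_smul, zero_add] using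
    ((Real.hasDerivAt_cos 0).smul_const q).fun_add
      ((Real.hasDerivAt_sin 0).smul_const (blockDiagCLM !![0, -1; 1, 0] q))

theorem hessian_apply_rotation_generator {V : (Fin n → EuclideanSpace ℝ (Fin 2)) → ℝ}
    {G : (Fin n → EuclideanSpace ℝ (Fin 2)) → (Fin n → EuclideanSpace ℝ (Fin 2))}
    {H : (Fin n → EuclideanSpace ℝ (Fin 2)) →L[ℝ] (Fin n → EuclideanSpace ℝ (Fin 2))}
    {d : Fin n → EuclideanSpace ℝ (Fin 2)} (hrot : ∀ t q, V (blockDiagCLM (rotMatrix t) q) = V q)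
    (hgrad : ∀ t, HasFDerivAt V (gradCLM (G (blockDiagCLM (rotMatrix t) d)))
      (blockDiagCLM (rotMatrix t) d))
    (hhess : HasFDerivAt G H d) :
    H (blockDiagCLM !![0, -1; 1, 0] d) = blockDiagCLM !![0, -1; 1, 0] (G d) := by
  have hequiv : ∀ t, G (blockDiagCLM (rotMatrix t) d) = blockDiagCLM (rotMatrix t) (G d) :=
    fun t => eq_blockDiagCLM_of_hasFDerivAt_gradCLM (transpose_rotMatrix_mul_self t) (hrot t)
      (by simpa only [rotMatrix_zero, blockDiagCLM_one_apply] using hgrad 0) (hgrad t)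
  have hH : HasDerivAt (fun t => G (blockDiagCLM (rotMatrix t) d))
      (H (blockDiagCLM !![0, -1; 1, 0] d)) 0 := by
    refine HasFDerivAt.comp_hasDerivAt (l := G) 0 ?_ (hasDerivAt_blockDiagCLM_rotMatrix d)
    rwa [rotMatrix_zero, blockDiagCLM_one_apply]
  simp only [hequiv] at hH
  exact hH.unique (hasDerivAt_blockDiagCLM_rotMatrix (G d))

end

theorem rotation_vector_eigenvector_one_general {n : ℕ}
    (V : (Fin n → EuclideanSpace ℝ (Fin 2)) → ℝ)
    (G : (Fin n → EuclideanSpace ℝ (Fin 2)) → (Fin n → EuclideanSpace ℝ (Fin 2)))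
    (HessOp : (Fin n → EuclideanSpace ℝ (Fin 2)) →
      ((Fin n → EuclideanSpace ℝ (Fin 2)) →L[ℝ] (Fin n → EuclideanSpace ℝ (Fin 2))))
    (s : Set (Fin n → EuclideanSpace ℝ (Fin 2)))
    (d : Fin n → EuclideanSpace ℝ (Fin 2)) (hds : d ∈ s)
    -- `s` is invariant under simultaneous rotations
    (hsrot : ∀ R : Matrix (Fin 2) (Fin 2) ℝ, Rᵀ * R = 1 → R.det = 1 →
      ∀ q ∈ s, (fun i => Matrix.toEuclideanLin R (q i)) ∈ s)
    -- rotation invariance of the potential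
    (hrot : ∀ R : Matrix (Fin 2) (Fin 2) ℝ, Rᵀ * R = 1 → R.det = 1 →
      ∀ q, V (fun i => Matrix.toEuclideanLin R (q i)) = V q)
    -- `G` is the gradient of `V` and `HessOp` its second derivative on `s`
    (hgrad : ∀ q ∈ s, HasFDerivAt V (gradCLM (G q)) q)
    (hhess : ∀ q ∈ s, HasFDerivAt G (HessOp q) q)
    (m : Fin n → ℝ) (μ : ℝ)
    -- the Darboux point condition ∇V(d) = μ M d
    (hDar : G d = fun i => (μ * m i) • d i) :
    -- H(d) (Ĵd) = Ĵd, written as ∇²V(d) (Ĵd) = μ M (Ĵd)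
    HessOp d (fun i => Matrix.toEuclideanLin !![0, -1; 1, 0] (d i)) =
      fun i => (μ * m i) • Matrix.toEuclideanLin !![0, -1; 1, 0] (d i) := by
  have hgen := hessian_apply_rotation_generator
    (fun t => hrot _ (transpose_rotMatrix_mul_self t) (det_rotMatrix t))
    (fun t => hgrad _ (hsrot _ (transpose_rotMatrix_mul_self t) (det_rotMatrix t) d hds))
    (hhess d hds)
  rw [hDar] at hgen
  simpa only [blockDiagCLM_apply, map_smul] using hgen

theorem rotation_vector_eigenvector_one {n : ℕ}
    (V : (Fin n → EuclideanSpace ℝ (Fin 2)) → ℝ)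
    (G : (Fin n → EuclideanSpace ℝ (Fin 2)) → (Fin n → EuclideanSpace ℝ (Fin 2)))
    (HessOp : (Fin n → EuclideanSpace ℝ (Fin 2)) →
      ((Fin n → EuclideanSpace ℝ (Fin 2)) →L[ℝ] (Fin n → EuclideanSpace ℝ (Fin 2))))
    (s : Set (Fin n → EuclideanSpace ℝ (Fin 2))) (hs : IsOpen s)
    (d : Fin n → EuclideanSpace ℝ (Fin 2)) (hds : d ∈ s)
    -- `s` is invariant under simultaneous rotations
    (hsrot : ∀ R : Matrix (Fin 2) (Fin 2) ℝ, Rᵀ * R = 1 → R.det = 1 →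
      ∀ q ∈ s, (fun i => Matrix.toEuclideanLin R (q i)) ∈ s)
    -- rotation invariance of the potential
    (hrot : ∀ R : Matrix (Fin 2) (Fin 2) ℝ, Rᵀ * R = 1 → R.det = 1 →
      ∀ q, V (fun i => Matrix.toEuclideanLin R (q i)) = V q)
    -- `G` is the gradient of `V` and `HessOp` its second derivative on `s`
    (hgrad : ∀ q ∈ s, HasFDerivAt V (gradCLM (G q)) q)
    (hhess : ∀ q ∈ s, HasFDerivAt G (HessOp q) q)
    (m : Fin n → ℝ) (hm : ∀ i, 0 < m i) (μ : ℝ) (hμ : μ ≠ 0)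
    -- the Darboux point condition ∇V(d) = μ M d
    (hDar : G d = fun i => (μ * m i) • d i)
    (hJd : (fun i => Matrix.toEuclideanLin !![0, -1; 1, 0] (d i)) ≠ 0) :
    -- H(d) (Ĵd) = Ĵd, written as ∇²V(d) (Ĵd) = μ M (Ĵd)
    HessOp d (fun i => Matrix.toEuclideanLin !![0, -1; 1, 0] (d i)) =
      fun i => (μ * m i) • Matrix.toEuclideanLin !![0, -1; 1, 0] (d i) :=
  rotation_vector_eigenvector_one_general V G HessOp s d hds hsrot hrot hgrad hhess m μ hDar
end

section
/- Let d be a collinear configuration with dᵢ = (xᵢ, 0), and let C be the n×n matrix with entries C_{ij} = -γᵢⱼ/(μ mᵢ |xᵢ-xⱼ|³) for i≠j and C_{ii} = -Σ_{j≠i} C_{ij}. If e = (e₁,...,eₙ) is an eigenvector of C with eigenvalue λ, then (e₁,0,e₂,0,...,eₙ,0) is an eigenvector of the 2n×2n matrix H(d) with eigenvalue -2λ, and (0,e₁,0,e₂,...,0,eₙ) is an eigenvector of H(d) with eigenvalue λ. -/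
/-!
`H(d)` is the Kronecker product `C ⊗ D`, and `D` is diagonal, so for an eigenvector `e` of `C`
with eigenvalue `λ` the vector `e ⊗ δₖ` is an eigenvector of `H(d)` with eigenvalue `λ · Dₖₖ`;
here `D₀₀ = -2` and `D₁₁ = 1`.
-/

open Matrix

/-- The n×n matrix `C` of a collinear configuration:
`C_{ij} = -γᵢⱼ/(μ mᵢ |xᵢ-xⱼ|³)` for `i ≠ j` and `C_{ii} = -∑_{j≠i} C_{ij}`. -/
noncomputable def Cmat {n : ℕ} (γ : Fin n → Fin n → ℝ) (m : Fin n → ℝ) (μ : ℝ)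
    (x : Fin n → ℝ) : Matrix (Fin n) (Fin n) ℝ :=
  fun i j =>
    if i = j then
      -∑ l ∈ Finset.univ.filter (· ≠ i), (-(γ i l / (μ * m i * |x i - x l| ^ 3)))
    else -(γ i j / (μ * m i * |x i - x j| ^ 3))

/-- The matrix `D = diag(-2, 1)`. -/
noncomputable def Dmat : Matrix (Fin 2) (Fin 2) ℝ := Matrix.diagonal ![-2, 1]

/-- The 2n×2n matrix `H(d)` of a collinear configuration, with 2×2 blocks
`H_{ij} = C_{ij} · D`. -/
noncomputable def HmatCollinear {n : ℕ} (γ : Fin n → Fin n → ℝ) (m : Fin n → ℝ)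
    (μ : ℝ) (x : Fin n → ℝ) : Matrix (Fin n × Fin 2) (Fin n × Fin 2) ℝ :=
  fun p q => Cmat γ m μ x p.1 q.1 * Dmat p.2 q.2

open scoped Kronecker

namespace Matrix

variable {R l m p q : Type*} [CommSemiring R] [Fintype m] [Fintype q]

theorem kronecker_mulVec_mul (A : Matrix l m R) (B : Matrix p q R) (u : m → R) (v : q → R) :
    (A ⊗ₖ B) *ᵥ (fun r => u r.1 * v r.2) = fun r => (A *ᵥ u) r.1 * (B *ᵥ v) r.2 := by
  ext ⟨i, k⟩
  simp only [mulVec, dotProduct, kroneckerMap_apply, Fintype.sum_prod_type, Finset.sum_mul_sum]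
  exact Finset.sum_congr rfl fun j _ => Finset.sum_congr rfl fun s _ => by ring

theorem kronecker_mulVec_mul_of_eigen {A : Matrix m m R} {B : Matrix q q R} {u : m → R}
    {v : q → R} {a b : R} (hu : A *ᵥ u = a • u) (hv : B *ᵥ v = b • v) :
    (A ⊗ₖ B) *ᵥ (fun r => u r.1 * v r.2) = (a * b) • fun r : m × q => u r.1 * v r.2 := by
  ext r
  simp only [kronecker_mulVec_mul, hu, hv, Pi.smul_apply, smul_eq_mul]
  ring

end Matrix

theorem ite_snd_eq_mul_single {ι κ R : Type*} [DecidableEq κ] [MulZeroOneClass R] (e : ι → R)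
    (k : κ) :
    (fun r : ι × κ => if r.2 = k then e r.1 else 0) =
      fun r => e r.1 * Pi.single (M := fun _ => R) k 1 r.2 := by
  ext r
  simp [Pi.single_apply]

theorem hmatCollinear_eq_kronecker {n : ℕ} (γ : Fin n → Fin n → ℝ) (m : Fin n → ℝ) (μ : ℝ)
    (x : Fin n → ℝ) : HmatCollinear γ m μ x = Cmat γ m μ x ⊗ₖ Dmat :=
  rfl

theorem dmat_mulVec_single (k : Fin 2) :
    Dmat *ᵥ Pi.single k 1 = (![-2, 1] : Fin 2 → ℝ) k • Pi.single k 1 := by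
  rw [Dmat, diagonal_mulVec_single, mul_one, ← Pi.single_smul, smul_eq_mul, mul_one]

theorem collinear_eigenvector_doubling_general {n : ℕ}
    (γ : Fin n → Fin n → ℝ)
    (m : Fin n → ℝ) (μ : ℝ)
    (x : Fin n → ℝ)
    (e : Fin n → ℝ) (lam : ℝ)
    (he : (Cmat γ m μ x).mulVec e = lam • e) :
    (HmatCollinear γ m μ x).mulVec (fun p => if p.2 = 0 then e p.1 else 0) =
        (-2 * lam) • (fun p => if p.2 = 0 then e p.1 else 0) ∧
      (HmatCollinear γ m μ x).mulVec (fun p => if p.2 = 1 then e p.1 else 0) =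
        lam • (fun p => if p.2 = 1 then e p.1 else 0) := by
  rw [ite_snd_eq_mul_single, ite_snd_eq_mul_single, hmatCollinear_eq_kronecker,
    kronecker_mulVec_mul_of_eigen he (dmat_mulVec_single 0),
    kronecker_mulVec_mul_of_eigen he (dmat_mulVec_single 1)]
  constructor <;> simp [mul_comm]

theorem collinear_eigenvector_doubling {n : ℕ}
    (γ : Fin n → Fin n → ℝ) (hγ : ∀ i j, γ i j = γ j i)
    (m : Fin n → ℝ) (hm : ∀ i, 0 < m i) (μ : ℝ) (hμ : μ ≠ 0)
    (x : Fin n → ℝ) (hsep : ∀ i j, i ≠ j → x i ≠ x j)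
    (e : Fin n → ℝ) (lam : ℝ)
    (he : (Cmat γ m μ x).mulVec e = lam • e) :
    (HmatCollinear γ m μ x).mulVec (fun p => if p.2 = 0 then e p.1 else 0) =
        (-2 * lam) • (fun p => if p.2 = 0 then e p.1 else 0) ∧
      (HmatCollinear γ m μ x).mulVec (fun p => if p.2 = 1 then e p.1 else 0) =
        lam • (fun p => if p.2 = 1 then e p.1 else 0) :=
  collinear_eigenvector_doubling_general γ m μ x e lam he
end

section
/- The matrix C defined by C_{ij} = -γᵢⱼ/(μ mᵢ|xᵢ-xⱼ|³) (i≠j), C_{ii} = -Σ_{j≠i}C_{ij}, where the xᵢ come from a collinear central configuration of the charged n-body problem, has 0 as an eigenvalue (with eigenvector (1,1,...,1)) and 1 as an eigenvalue (with eigenvector (x₁,...,xₙ) when it is not proportional to (1,...,1)). -/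
open Matrix

/-!
Every row of `C` sums to zero, so `(C v)ᵢ = ∑_{j≠i} Cᵢⱼ (vⱼ - vᵢ)`. For `v = 1` this vanishes, and
for `v = x` it is `(μ mᵢ)⁻¹` times the left-hand side of the `i`-th central configuration equation,
that is, `xᵢ`.
-/

open Finset

section ZeroRowSum

variable {ι R : Type*} [Fintype ι] [DecidableEq ι] [CommRing R]

theorem mulVec_apply_eq_sum_ne_of_diag_eq_neg_sum {A : Matrix ι ι R}
    (hA : ∀ i, A i i = -∑ j ∈ univ.filter (· ≠ i), A i j) (v : ι → R) (i : ι) :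
    (A *ᵥ v) i = ∑ j ∈ univ.filter (· ≠ i), A i j * (v j - v i) := by
  rw [mulVec, dotProduct, filter_ne', ← add_sum_erase univ _ (mem_univ i), hA, filter_ne',
    neg_mul, sum_mul, neg_add_eq_sub, ← sum_sub_distrib]
  simp only [mul_sub]

theorem mulVec_const_eq_zero_of_diag_eq_neg_sum {A : Matrix ι ι R}
    (hA : ∀ i, A i i = -∑ j ∈ univ.filter (· ≠ i), A i j) (c : R) :
    A *ᵥ (fun _ => c) = 0 := by
  funext i
  simp [mulVec_apply_eq_sum_ne_of_diag_eq_neg_sum hA]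

end ZeroRowSum

section Cmat

variable {n : ℕ} (γ : Fin n → Fin n → ℝ) (m : Fin n → ℝ) (μ : ℝ) (x : Fin n → ℝ)

theorem Cmat_diag_eq_neg_sum (i : Fin n) :
    Cmat γ m μ x i i = -∑ j ∈ univ.filter (· ≠ i), Cmat γ m μ x i j := by
  simp only [Cmat, ↓reduceIte, neg_inj]
  refine sum_congr rfl fun j hj => ?_
  rw [if_neg (mem_filter.mp hj).2.symm]

theorem Cmat_mulVec_apply (v : Fin n → ℝ) (i : Fin n) :
    (Cmat γ m μ x *ᵥ v) i =
      (μ * m i)⁻¹ * ∑ j ∈ univ.filter (· ≠ i), γ i j * (v i - v j) / |x i - x j| ^ 3 := by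
  rw [mulVec_apply_eq_sum_ne_of_diag_eq_neg_sum (Cmat_diag_eq_neg_sum γ m μ x), mul_sum]
  refine sum_congr rfl fun j hj => ?_
  rw [Cmat, if_neg (mem_filter.mp hj).2.symm]
  ring

end Cmat

theorem Cmat_eigenvalues_zero_and_one_general {n : ℕ}
    (γ : Fin n → Fin n → ℝ)
    (m : Fin n → ℝ) (hm : ∀ i, 0 < m i) (μ : ℝ) (hμ : μ ≠ 0)
    (x : Fin n → ℝ)
    -- the collinear central configuration equations
    (hcc : ∀ i, ∑ j ∈ Finset.univ.filter (· ≠ i),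
      γ i j * (x i - x j) / |x i - x j| ^ 3 = μ * m i * x i)
    -- center-of-mass frame, nontrivial configuration
    (hne : ∃ i j, x i ≠ x j) :
    (Cmat γ m μ x).mulVec (fun _ => 1) = (0 : ℝ) • (fun _ => (1 : ℝ)) ∧
      (Cmat γ m μ x).mulVec x = (1 : ℝ) • x ∧
      ¬∃ c : ℝ, x = fun _ => c := by
  refine ⟨?_, ?_, ?_⟩
  · rw [zero_smul]
    exact mulVec_const_eq_zero_of_diag_eq_neg_sum (Cmat_diag_eq_neg_sum γ m μ x) 1
  · funext i
    rw [Cmat_mulVec_apply, hcc i, one_smul, ← mul_assoc,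
      inv_mul_cancel₀ (mul_ne_zero hμ (hm i).ne'), one_mul]
  · rintro ⟨c, rfl⟩
    obtain ⟨i, j, hij⟩ := hne
    exact hij rfl

theorem Cmat_eigenvalues_zero_and_one {n : ℕ}
    (γ : Fin n → Fin n → ℝ) (hγ : ∀ i j, γ i j = γ j i)
    (m : Fin n → ℝ) (hm : ∀ i, 0 < m i) (μ : ℝ) (hμ : μ ≠ 0)
    (x : Fin n → ℝ) (hsep : ∀ i j, i ≠ j → x i ≠ x j)
    -- the collinear central configuration equations
    (hcc : ∀ i, ∑ j ∈ Finset.univ.filter (· ≠ i),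
      γ i j * (x i - x j) / |x i - x j| ^ 3 = μ * m i * x i)
    -- center-of-mass frame, nontrivial configuration
    (hcm : ∑ i, m i * x i = 0) (hne : ∃ i j, x i ≠ x j) :
    (Cmat γ m μ x).mulVec (fun _ => 1) = (0 : ℝ) • (fun _ => (1 : ℝ)) ∧
      (Cmat γ m μ x).mulVec x = (1 : ℝ) • x ∧
      ¬∃ c : ℝ, x = fun _ => c :=
  Cmat_eigenvalues_zero_and_one_general γ m hm μ hμ x hcc hne
end

section
/- With α₂ given by α₂ = u²[α₃m₃(u+1)²(m₁(u+1)+m₂u) + α₁m₂(m₃u-m₁)]/[m₁(u+1)²(m₃(u+1)+m₂)], define λ₁ = (m₁+m₂+m₃)[α₁+α₃(u+1)²]/(m₁(u+1)²[m₃(u+1)+m₂]) and λ₂ = [α₁+α₃(u+1)³]/(m₁(u+1)³) + [α₃m₃(u+1)⁴ - α₁m₂]/(m₂m₃u(u+1)³). Then λ₁ = λ₂ if and only if α₁ = α₃m₃(u+1)³/m₂ or m₂ = -m₁m₃(u+1)²/(m₃u²+m₁). -/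
/-!
Over a common denominator, `λ₁ - λ₂` factors as
`(m₂ α₁ - α₃ m₃ (u+1)³) (m₂ (m₃ u² + m₁) + m₁ m₃ (u+1)²)`.
For positive masses and `u > 0` the second factor is positive, so `λ₁ = λ₂` exactly when the
first one vanishes; the second alternative of the theorem is never satisfied, since it asks the
positive `m₂` to equal a negative number.
-/

section Field

variable {K : Type*} [Field K]

def lambda₁ (m₁ m₂ m₃ α₁ α₃ u : K) : K :=
  (m₁ + m₂ + m₃) * (α₁ + α₃ * (u + 1) ^ 2) / (m₁ * (u + 1) ^ 2 * (m₃ * (u + 1) + m₂))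

def lambda₂ (m₁ m₂ m₃ α₁ α₃ u : K) : K :=
  (α₁ + α₃ * (u + 1) ^ 3) / (m₁ * (u + 1) ^ 3) +
    (α₃ * m₃ * (u + 1) ^ 4 - α₁ * m₂) / (m₂ * m₃ * u * (u + 1) ^ 3)

theorem lambda₁_sub_lambda₂ {m₁ m₂ m₃ α₁ α₃ u : K} (hm₁ : m₁ ≠ 0) (hm₂ : m₂ ≠ 0)
    (hm₃ : m₃ ≠ 0) (hu : u ≠ 0) (hu₁ : u + 1 ≠ 0) (hd : m₃ * (u + 1) + m₂ ≠ 0) :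
    lambda₁ m₁ m₂ m₃ α₁ α₃ u - lambda₂ m₁ m₂ m₃ α₁ α₃ u =
      (m₂ * α₁ - α₃ * m₃ * (u + 1) ^ 3) * (m₂ * (m₃ * u ^ 2 + m₁) + m₁ * m₃ * (u + 1) ^ 2) /
        (m₁ * m₂ * m₃ * u * (u + 1) ^ 3 * (m₃ * (u + 1) + m₂)) := by
  unfold lambda₁ lambda₂
  field_simp
  ring

theorem lambda₁_eq_lambda₂_iff {m₁ m₂ m₃ α₁ α₃ u : K} (hm₁ : m₁ ≠ 0) (hm₂ : m₂ ≠ 0)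
    (hm₃ : m₃ ≠ 0) (hu : u ≠ 0) (hu₁ : u + 1 ≠ 0) (hd : m₃ * (u + 1) + m₂ ≠ 0)
    (hq : m₂ * (m₃ * u ^ 2 + m₁) + m₁ * m₃ * (u + 1) ^ 2 ≠ 0) :
    lambda₁ m₁ m₂ m₃ α₁ α₃ u = lambda₂ m₁ m₂ m₃ α₁ α₃ u ↔
      α₁ = α₃ * m₃ * (u + 1) ^ 3 / m₂ := by
  rw [← sub_eq_zero, lambda₁_sub_lambda₂ hm₁ hm₂ hm₃ hu hu₁ hd, eq_div_iff hm₂,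
    div_eq_zero_iff, mul_eq_zero, sub_eq_zero, mul_comm m₂ α₁]
  have hden : m₁ * m₂ * m₃ * u * (u + 1) ^ 3 * (m₃ * (u + 1) + m₂) ≠ 0 := by
    simp [hm₁, hm₂, hm₃, hu, hu₁, hd]
  simp only [hq, hden, or_false]

end Field

theorem lambda_equality_condition_general
    (m₁ m₂ m₃ : ℝ) (hm₁ : 0 < m₁) (hm₂ : 0 < m₂) (hm₃ : 0 < m₃)
    (α₁ α₃ : ℝ) (u : ℝ) (hu : 0 < u) :
    ((m₁ + m₂ + m₃) * (α₁ + α₃ * (u + 1) ^ 2) /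
          (m₁ * (u + 1) ^ 2 * (m₃ * (u + 1) + m₂)) =
        (α₁ + α₃ * (u + 1) ^ 3) / (m₁ * (u + 1) ^ 3) +
          (α₃ * m₃ * (u + 1) ^ 4 - α₁ * m₂) / (m₂ * m₃ * u * (u + 1) ^ 3)) ↔
      (α₁ = α₃ * m₃ * (u + 1) ^ 3 / m₂ ∨
        m₂ = -(m₁ * m₃ * (u + 1) ^ 2) / (m₃ * u ^ 2 + m₁)) := by
  have hm₂_ne : m₂ ≠ -(m₁ * m₃ * (u + 1) ^ 2) / (m₃ * u ^ 2 + m₁) := by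
    refine (lt_trans ?_ hm₂).ne'
    exact div_neg_of_neg_of_pos (neg_neg_of_pos (by positivity)) (by positivity)
  rw [or_iff_left hm₂_ne]
  exact lambda₁_eq_lambda₂_iff hm₁.ne' hm₂.ne' hm₃.ne' hu.ne' (by positivity) (by positivity)
    (by positivity)

theorem lambda_equality_condition
    (m₁ m₂ m₃ : ℝ) (hm₁ : 0 < m₁) (hm₂ : 0 < m₂) (hm₃ : 0 < m₃)
    (α₁ α₂ α₃ : ℝ) (u : ℝ) (hu : 0 < u)
    (hα₂ : α₂ = u ^ 2 * (α₃ * m₃ * (u + 1) ^ 2 * (m₁ * (u + 1) + m₂ * u) +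
        α₁ * m₂ * (m₃ * u - m₁)) / (m₁ * (u + 1) ^ 2 * (m₃ * (u + 1) + m₂))) :
    ((m₁ + m₂ + m₃) * (α₁ + α₃ * (u + 1) ^ 2) /
          (m₁ * (u + 1) ^ 2 * (m₃ * (u + 1) + m₂)) =
        (α₁ + α₃ * (u + 1) ^ 3) / (m₁ * (u + 1) ^ 3) +
          (α₃ * m₃ * (u + 1) ^ 4 - α₁ * m₂) / (m₂ * m₃ * u * (u + 1) ^ 3)) ↔
      (α₁ = α₃ * m₃ * (u + 1) ^ 3 / m₂ ∨
        m₂ = -(m₁ * m₃ * (u + 1) ^ 2) / (m₃ * u ^ 2 + m₁)) :=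
  lambda_equality_condition_general m₁ m₂ m₃ hm₁ hm₂ hm₃ α₁ α₃ u hu
end
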